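/- Under Assumptions 1 and 2, the PIAG algorithm with step size 0 < η ≤ 1/(L(K+1)) satisfies (1 + ημ/8) F_{k+1} ≤ (1 − Σ_{i=1}^{a−1} ε_i) F_k + Σ_{i=1}^{a−1} ε_i F_{k−iK} + 4KQ ε_{a−1} Σ_{j=k−aK}^{k} F_j for any integer a ≥ 2 and k ≥ aK+1, where ε_i = 2ηL(ηKL)^{i−1} and Q = L/μ. -/

import Mathlib

/-!
With `e_k = g_k - ∇f(x_k)` the error of the delayed gradient, the descent lemma, the strong-convexity
lower bound and the optimality condition of the prox step give, for every `z`,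
`F(x_{k+1}) ≤ F(z) + ⟪z - x_{k+1}, d_k + e_k⟫ + Lη²/2 ‖d_k‖² - μ/2 ‖z - x_k‖²`.
Taking `z = x_k` gives the descent `F_{j+1} ≤ F_j - η/2 (1 - ηL) ‖d_j‖² + η/2 ‖e_j‖²`, and combining it
with `z = x*` gives `(1 + ημ/8) F_{k+1} ≤ F_k + η ‖e_k‖²`.

Since the delays are at most `K`, `‖e_j‖² ≤ η²L²K ∑_{j-K ≤ l < j} ‖d_l‖²`. Summing the descent over the
window `[k - iK, k)` bounds its steps by `F_{k-iK} - F_k` plus the steps of the window reaching `K`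
further back, weighted by `ηKL`: unrolling this `a - 1` times produces the geometric weights `ε_i`.
The last window is absorbed by quadratic growth around `x*`, `μη² ‖d_l‖² ≤ 4 (F_l + F_{l+1})`.
-/

open Filter RealInnerProductSpace Finset

lemma le_of_forall_one_sub_mul_le {B C : ℝ} (h : ∀ t ∈ Set.Ioo (0 : ℝ) 1, (1 - t) * B ≤ C) :
    B ≤ C := by
  have hlim := (by fun_prop : Continuous fun t : ℝ => (1 - t) * B).tendsto' 0 B (by simp)
  exact le_of_tendsto (hlim.mono_left nhdsWithin_le_nhds)
    (eventually_of_mem (Ioo_mem_nhdsGT one_pos) h)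

lemma le_sum_Icc_add_of_le_add_succ {u v : ℕ → ℝ} {t : ℕ}
    (h : ∀ i ∈ Icc 1 t, u i ≤ v i + u (i + 1)) : u 1 ≤ ∑ i ∈ Icc 1 t, v i + u (t + 1) := by
  induction t with
  | zero => simp
  | succ t ih =>
    rw [sum_Icc_succ_top (by omega)]
    have := h (t + 1) (by simp)
    linarith [ih fun i hi => h i (by simp only [mem_Icc] at hi ⊢; omega)]

lemma sum_Ico_sum_Ico_sub_le {D : ℕ → ℝ} (hD : ∀ l, 0 ≤ D l) (K p q : ℕ) :
    ∑ j ∈ Ico p q, ∑ l ∈ Ico (j - K) j, D l ≤ K * ∑ l ∈ Ico (p - K) q, D l := by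
  rw [sum_comm' (t' := Ico (p - K) q) (s' := fun l => Ico p q ∩ Ioc l (l + K))
    (fun j l => by simp only [mem_Ico, mem_inter, mem_Ioc]; omega), mul_sum]
  refine sum_le_sum fun l _ => ?_
  rw [sum_const, nsmul_eq_mul]
  gcongr
  · exact hD l
  · calc #(Ico p q ∩ Ioc l (l + K)) ≤ #(Ioc l (l + K)) := card_le_card inter_subset_right
      _ = K := by simp

lemma sum_Ico_add_succ_le_two_mul {F : ℕ → ℝ} (hF : ∀ j, 0 ≤ F j) (p q : ℕ) :
    ∑ l ∈ Ico p q, (F l + F (l + 1)) ≤ 2 * ∑ l ∈ Icc p q, F l := by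
  have hsub : ∀ s ⊆ Icc p q, ∑ l ∈ s, F l ≤ ∑ l ∈ Icc p q, F l :=
    fun s hs => sum_le_sum_of_subset_of_nonneg hs fun l _ _ => hF l
  have h1 := hsub (Ico p q) fun l => by simp only [mem_Ico, mem_Icc]; omega
  have h2 := hsub (Ico (p + 1) (q + 1)) fun l => by simp only [mem_Ico, mem_Icc]; omega
  rw [← sum_Ico_add'] at h2
  rw [sum_add_distrib]
  linarith

section ConvexAnalysis

variable {E : Type*} [NormedAddCommGroup E] [InnerProductSpace ℝ E]

lemma StrongConvexOn.add_convexOn {s : Set E} {f g : E → ℝ} {μ : ℝ} (hf : StrongConvexOn s μ f)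
    (hg : ConvexOn ℝ s g) : StrongConvexOn s μ (f + g) := by
  have h := hf.add hg.uniformConvexOn_zero
  rwa [add_zero] at h

lemma StrongConvexOn.add_sq_norm_sub_le_of_isMinOn {f : E → ℝ} {μ : ℝ} {w : E}
    (hf : StrongConvexOn Set.univ μ f) (hw : IsMinOn f Set.univ w) (z : E) :
    f w + μ / 2 * ‖z - w‖ ^ 2 ≤ f z := by
  suffices μ / 2 * ‖z - w‖ ^ 2 ≤ f z - f w by linarith
  refine le_of_forall_one_sub_mul_le fun t ht => ?_
  have hconv := hf.2 (Set.mem_univ w) (Set.mem_univ z) (sub_nonneg.mpr ht.2.le) ht.1.le (by ring)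
  have hmin := isMinOn_univ_iff.mp hw ((1 - t) • w + t • z)
  rw [norm_sub_rev] at hconv
  simp only [smul_eq_mul] at hconv
  have : t * ((1 - t) * (μ / 2 * ‖z - w‖ ^ 2)) ≤ t * (f z - f w) := by nlinarith
  exact le_of_mul_le_mul_left this ht.1

lemma StrongConvexOn.mul_sq_norm_sub_le_of_isMinOn {F : E → ℝ} {μ : ℝ} {xs : E}
    (hF : StrongConvexOn Set.univ μ F) (hμ : 0 ≤ μ) (hxs : IsMinOn F Set.univ xs) (u v : E) :
    μ * ‖u - v‖ ^ 2 ≤ 4 * ((F u - F xs) + (F v - F xs)) := by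
  have hu := hF.add_sq_norm_sub_le_of_isMinOn hxs u
  have hv := hF.add_sq_norm_sub_le_of_isMinOn hxs v
  have htri := norm_sub_le_norm_sub_add_norm_sub u xs v
  rw [norm_sub_rev xs v] at htri
  have hsq : ‖u - v‖ ^ 2 ≤ 2 * (‖u - xs‖ ^ 2 + ‖v - xs‖ ^ 2) := by
    nlinarith [norm_nonneg (u - v), sq_nonneg (‖u - xs‖ - ‖v - xs‖)]
  nlinarith [mul_le_mul_of_nonneg_left hsq hμ]

lemma strongConvexOn_half_sq_norm_sub (y : E) :
    StrongConvexOn Set.univ 1 fun z : E => 1 / 2 * ‖z - y‖ ^ 2 := by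
  rw [strongConvexOn_iff_convex]
  have haff : (fun z : E => 1 / 2 * ‖z - y‖ ^ 2 - 1 / 2 * ‖z‖ ^ 2)
      = fun z => (-innerₛₗ ℝ y) z + 1 / 2 * ‖y‖ ^ 2 := by
    funext z
    simp only [norm_sub_sq_real, LinearMap.neg_apply, innerₛₗ_apply_apply, real_inner_comm y z]
    ring
  rw [haff]
  exact ((-innerₛₗ ℝ y).convexOn convex_univ).add_const _

lemma ConvexOn.le_add_inner_of_isMinOn {r : E → ℝ} {y w : E} (hr : ConvexOn ℝ Set.univ r)
    (hw : IsMinOn (fun z => 1 / 2 * ‖z - y‖ ^ 2 + r z) Set.univ w) (z : E) :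
    r w ≤ r z + ⟪z - w, w - y⟫ := by
  have hgrowth :=
    ((strongConvexOn_half_sq_norm_sub y).add_convexOn hr).add_sq_norm_sub_le_of_isMinOn hw z
  simp only [Pi.add_apply] at hgrowth
  have hexp : ‖z - y‖ ^ 2 = ‖z - w‖ ^ 2 + 2 * ⟪z - w, w - y⟫ + ‖w - y‖ ^ 2 := by
    rw [← norm_add_sq_real, sub_add_sub_cancel]
  rw [hexp] at hgrowth
  linarith

lemma inner_sub_mul_sq_le {μ : ℝ} (hμ : 0 < μ) (v w : E) :
    ⟪v, w⟫ - μ / 2 * ‖v‖ ^ 2 ≤ ‖w‖ ^ 2 / (2 * μ) := by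
  have h := norm_sub_sq_real w (μ • v)
  rw [norm_smul, real_inner_smul_right, Real.norm_of_nonneg hμ.le, real_inner_comm] at h
  rw [le_div_iff₀ (by positivity)]
  nlinarith [sq_nonneg ‖w - μ • v‖]

variable [CompleteSpace E]

lemma HasGradientAt.hasDerivAt_add_smul {f : E → ℝ} {G x v : E} {t : ℝ}
    (hf : HasGradientAt f G (x + t • v)) :
    HasDerivAt (fun s : ℝ => f (x + s • v)) ⟪G, v⟫ t := by
  have hline : HasDerivAt (fun s : ℝ => x + s • v) v t := by
    simpa using ((hasDerivAt_id t).smul_const v).const_add x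
  exact hf.hasFDerivAt.comp_hasDerivAt t hline

lemma hasGradientAt_mul_sum {ι : Type*} [Fintype ι] {f : ι → E → ℝ} (c : ℝ) {y : E}
    (hf : ∀ i, DifferentiableAt ℝ (f i) y) :
    HasGradientAt (fun z => c * ∑ i, f i z) (c • ∑ i, gradient (f i) y) y := by
  rw [hasGradientAt_iff_hasFDerivAt, map_smul, map_sum]
  exact (HasFDerivAt.fun_sum fun i _ => (hf i).hasGradientAt.hasFDerivAt).const_mul c

lemma StrongConvexOn.add_inner_le_of_hasGradientAt {f : E → ℝ} {μ : ℝ} {x z G : E}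
    (hf : StrongConvexOn Set.univ μ f) (hG : HasGradientAt f G x) :
    f x + ⟪G, z - x⟫ + μ / 2 * ‖z - x‖ ^ 2 ≤ f z := by
  set v := z - x
  set φ : ℝ → ℝ := fun t => f (x + t • v) - μ / 2 * ‖x + t • v‖ ^ 2
  have hφ : ConvexOn ℝ Set.univ φ := by
    have hline : φ = (fun y => f y - μ / 2 * ‖y‖ ^ 2) ∘ AffineMap.lineMap x z := by
      funext t
      simp [φ, v, AffineMap.lineMap_apply, add_comm]
    rw [hline]
    exact (strongConvexOn_iff_convex.mp hf).comp_affineMap _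
  have hφ' : HasDerivAt φ (⟪G, v⟫ - μ / 2 * (2 * ⟪x, v⟫)) 0 := by
    refine (HasGradientAt.hasDerivAt_add_smul (by simpa using hG)).sub ?_
    refine HasDerivAt.const_mul _ ?_
    simpa using (((hasDerivAt_id (0:ℝ)).smul_const v).const_add x).norm_sq
  have key := hφ.le_slope_of_hasDerivAt (Set.mem_univ 0) (Set.mem_univ 1) one_pos hφ'
  simp only [slope_def_field, φ, zero_smul, add_zero, one_smul, sub_zero, div_one] at key
  have hz : x + v = z := by simp [v]
  rw [hz] at key
  have hsq : ‖z‖ ^ 2 = ‖x‖ ^ 2 + 2 * ⟪x, v⟫ + ‖v‖ ^ 2 := by rw [← hz, norm_add_sq_real]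
  rw [hsq] at key
  linarith

lemma StrongConvexOn.le_of_lipschitz_gradient [Nontrivial E] {f : E → ℝ} {G : E → E}
    {μ L : ℝ} (hf : StrongConvexOn Set.univ μ f) (hG : ∀ y, HasGradientAt f (G y) y)
    (hGL : ∀ u v, ‖G u - G v‖ ≤ L * ‖u - v‖) : μ ≤ L := by
  obtain ⟨v, hv⟩ := exists_ne (0 : E)
  have h0 := hf.add_inner_le_of_hasGradientAt (z := v) (hG 0)
  have hv' := hf.add_inner_le_of_hasGradientAt (z := 0) (hG v)
  have hmono : ⟪G v - G 0, v⟫ ≤ L * ‖v‖ ^ 2 :=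
    calc ⟪G v - G 0, v⟫ ≤ ‖G v - G 0‖ * ‖v‖ := real_inner_le_norm _ _
      _ ≤ L * ‖v - 0‖ * ‖v‖ := by gcongr; exact hGL _ _
      _ = L * ‖v‖ ^ 2 := by rw [sub_zero]; ring
  simp only [sub_zero, zero_sub, inner_neg_right, norm_neg] at h0 hv'
  rw [inner_sub_left] at hmono
  have hpos : 0 < ‖v‖ ^ 2 := by positivity
  nlinarith

lemma le_add_inner_add_sq_of_lipschitz_gradient {f : E → ℝ} {G : E → E} {L : ℝ}
    (hG : ∀ y, HasGradientAt f (G y) y) (hGL : ∀ u v, ‖G u - G v‖ ≤ L * ‖u - v‖) (x u : E) :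
    f (x + u) ≤ f x + ⟪G x, u⟫ + L / 2 * ‖u‖ ^ 2 := by
  set ψ : ℝ → ℝ := fun t => f (x + t • u) - t * ⟪G x, u⟫ - L / 2 * t ^ 2 * ‖u‖ ^ 2
  have hψ : ∀ t, HasDerivAt ψ (⟪G (x + t • u), u⟫ - ⟪G x, u⟫ - L * t * ‖u‖ ^ 2) t := by
    intro t
    have hsq : HasDerivAt (fun s : ℝ => L / 2 * s ^ 2 * ‖u‖ ^ 2) (L * t * ‖u‖ ^ 2) t := by
      have hpow : HasDerivAt (fun s : ℝ => s ^ 2) (2 * t) t := by simpa using hasDerivAt_pow 2 t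
      rw [show L * t * ‖u‖ ^ 2 = L / 2 * (2 * t) * ‖u‖ ^ 2 by ring]
      exact (hpow.const_mul (L / 2)).mul_const (‖u‖ ^ 2)
    have hlin : HasDerivAt (fun s : ℝ => s * ⟪G x, u⟫) ⟪G x, u⟫ t := by
      simpa using (hasDerivAt_id t).mul_const ⟪G x, u⟫
    exact (((hG _).hasDerivAt_add_smul).sub hlin).sub hsq
  obtain ⟨c, hc, hslope⟩ := exists_hasDerivAt_eq_slope ψ _ one_pos
    (fun t _ => (hψ t).continuousAt.continuousWithinAt) (fun t _ => hψ t)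
  have hderiv : ⟪G (x + c • u), u⟫ - ⟪G x, u⟫ ≤ L * c * ‖u‖ ^ 2 := by
    calc ⟪G (x + c • u), u⟫ - ⟪G x, u⟫ = ⟪G (x + c • u) - G x, u⟫ := (inner_sub_left ..).symm
      _ ≤ ‖G (x + c • u) - G x‖ * ‖u‖ := real_inner_le_norm _ _
      _ ≤ L * ‖(x + c • u) - x‖ * ‖u‖ := by gcongr; exact hGL _ _
      _ = L * c * ‖u‖ ^ 2 := by
        rw [add_sub_cancel_left, norm_smul, Real.norm_of_nonneg hc.1.le]; ring
  simp only [ψ, one_smul, zero_smul, add_zero, one_pow, one_mul, zero_mul,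
    sub_zero, div_one] at hslope
  linarith

lemma proxGrad_le_add_inner {f r : E → ℝ} {G : E → E} {μ L η : ℝ} {x x' g d : E}
    (hG : ∀ y, HasGradientAt f (G y) y)
    (hGL : ∀ u v, ‖G u - G v‖ ≤ L * ‖u - v‖) (hf : StrongConvexOn Set.univ μ f)
    (hr : ConvexOn ℝ Set.univ r) (hη : 0 < η) (hx' : x' = x + η • d)
    (hmin : IsMinOn (fun z => 1 / 2 * ‖z - (x - η • g)‖ ^ 2 + η * r z) Set.univ x') (z : E) :
    (f + r) x' ≤ (f + r) z + ⟪z - x', d + (g - G x)⟫ + L * η ^ 2 / 2 * ‖d‖ ^ 2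
      - μ / 2 * ‖z - x‖ ^ 2 := by
  simp only [Pi.add_apply]
  have hprox := (hr.smul hη.le).le_add_inner_of_isMinOn hmin z
  have hstep : x' - (x - η • g) = η • (d + g) := by rw [hx', smul_add]; abel
  rw [hstep, inner_smul_right] at hprox
  have hprox' : r x' ≤ r z + ⟪z - x', d + g⟫ := by
    simp only [smul_eq_mul] at hprox
    nlinarith
  have hdesc := le_add_inner_add_sq_of_lipschitz_gradient hG hGL x (η • d)
  rw [← hx', norm_smul, Real.norm_of_nonneg hη.le, inner_smul_right, mul_pow] at hdesc
  have hsc := hf.add_inner_le_of_hasGradientAt (z := z) (hG x)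
  have hzx : z - x = (z - x') + η • d := by rw [hx']; abel
  rw [hzx, inner_add_right, inner_smul_right, ← hzx] at hsc
  have hsplit : ⟪z - x', d + (g - G x)⟫ = ⟪z - x', d + g⟫ - ⟪G x, z - x'⟫ := by
    rw [real_inner_comm (z - x'), ← inner_sub_right, add_sub_assoc']
  linarith

end ConvexAnalysis

section ProxGradInequality

variable {E : Type*} [NormedAddCommGroup E] [InnerProductSpace ℝ E] {F : E → ℝ} {μ L η : ℝ}
  {x x' d e : E}

lemma proxGrad_le_self_sub
    (hB : ∀ z, F x' ≤ F z + ⟪z - x', d + e⟫ + L * η ^ 2 / 2 * ‖d‖ ^ 2 - μ / 2 * ‖z - x‖ ^ 2)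
    (hx' : x' = x + η • d) :
    F x' ≤ F x - η * (1 - η * L / 2) * ‖d‖ ^ 2 - η * ⟪d, e⟫ := by
  subst hx'
  have h := hB x
  rw [sub_add_cancel_left, inner_neg_left, real_inner_smul_left, inner_add_right,
    real_inner_self_eq_norm_sq, sub_self, norm_zero] at h
  linarith

lemma proxGrad_descent
    (hB : ∀ z, F x' ≤ F z + ⟪z - x', d + e⟫ + L * η ^ 2 / 2 * ‖d‖ ^ 2 - μ / 2 * ‖z - x‖ ^ 2)
    (hx' : x' = x + η • d) (hη : 0 < η) :
    F x' ≤ F x - η / 2 * (1 - η * L) * ‖d‖ ^ 2 + η / 2 * ‖e‖ ^ 2 := by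
  have h := proxGrad_le_self_sub hB hx'
  have hyoung : -⟪d, e⟫ ≤ (‖d‖ ^ 2 + ‖e‖ ^ 2) / 2 := by
    nlinarith [neg_le_of_abs_le (abs_real_inner_le_norm d e), sq_nonneg (‖d‖ - ‖e‖)]
  nlinarith [mul_le_mul_of_nonneg_left hyoung hη.le]

lemma proxGrad_contraction {xs : E}
    (hB : ∀ z, F x' ≤ F z + ⟪z - x', d + e⟫ + L * η ^ 2 / 2 * ‖d‖ ^ 2 - μ / 2 * ‖z - x‖ ^ 2)
    (hx' : x' = x + η • d) (hη : 0 < η) (hμ : 0 < μ) (hηL : η * L ≤ 1) (hημ : η * μ ≤ 1) :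
    (1 + η * μ / 8) * (F x' - F xs) ≤ F x - F xs + η * ‖e‖ ^ 2 := by
  have hself := proxGrad_le_self_sub hB hx'
  have hyoung : -⟪d, e⟫ ≤ 3 / 8 * ‖d‖ ^ 2 + 2 / 3 * ‖e‖ ^ 2 := by
    have h := norm_add_sq_real ((3 / 4 : ℝ) • d) e
    rw [norm_smul, real_inner_smul_left, Real.norm_of_nonneg (by norm_num)] at h
    nlinarith [sq_nonneg ‖(3 / 4 : ℝ) • d + e‖]
  have hopt : F x' - F xs ≤ (‖d‖ ^ 2 + ‖e‖ ^ 2) / μ + η / 2 * ‖e‖ ^ 2 := by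
    have h := hB xs
    have hsplit : xs - x' = (xs - x) - η • d := by rw [hx']; abel
    rw [hsplit, inner_sub_left, real_inner_smul_left, inner_add_right d d e,
      real_inner_self_eq_norm_sq] at h
    have hvw := inner_sub_mul_sq_le hμ (xs - x) (d + e)
    have hpar : ‖d + e‖ ^ 2 ≤ 2 * ‖d‖ ^ 2 + 2 * ‖e‖ ^ 2 := by
      nlinarith [parallelogram_law_with_norm ℝ d e, sq_nonneg ‖d - e‖]
    have hdiv : ‖d + e‖ ^ 2 / (2 * μ) ≤ (‖d‖ ^ 2 + ‖e‖ ^ 2) / μ := by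
      rw [div_le_div_iff₀ (by positivity) hμ]; nlinarith
    nlinarith [neg_le_of_abs_le (abs_real_inner_le_norm d e), sq_nonneg (‖d‖ - ‖e‖),
      mul_le_mul_of_nonneg_right hηL (mul_nonneg hη.le (sq_nonneg ‖d‖))]
  have h1 : F x' - F xs ≤ F x - F xs - η / 8 * ‖d‖ ^ 2 + 2 * η / 3 * ‖e‖ ^ 2 := by
    nlinarith [mul_le_mul_of_nonneg_left hyoung hη.le,
      mul_le_mul_of_nonneg_right hηL (mul_nonneg hη.le (sq_nonneg ‖d‖))]
  have h2 := mul_le_mul_of_nonneg_left hopt (by positivity : 0 ≤ η * μ / 8)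
  have h3 : η * μ / 8 * ((‖d‖ ^ 2 + ‖e‖ ^ 2) / μ) = η / 8 * (‖d‖ ^ 2 + ‖e‖ ^ 2) := by
    field_simp
  nlinarith [mul_le_mul_of_nonneg_right hημ (mul_nonneg hη.le (sq_nonneg ‖e‖))]

end ProxGradInequality

section Aggregated

variable {E : Type*} [NormedAddCommGroup E] [InnerProductSpace ℝ E] {ι : Type*} [Fintype ι]
  {c : ℝ} {h : ι → E → E} {Li : ι → ℝ}

lemma norm_smul_sum_sub_le (hc : 0 ≤ c) (hLi : ∀ i, 0 ≤ Li i)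
    (hLip : ∀ i u v, ‖h i u - h i v‖ ≤ Li i * ‖u - v‖) {y : ι → E} {x : E} {δ : ℝ}
    (hy : ∀ i, ‖y i - x‖ ≤ δ) :
    ‖c • ∑ i, h i (y i) - c • ∑ i, h i x‖ ≤ c * (∑ i, Li i) * δ := by
  rw [← smul_sub, ← sum_sub_distrib, norm_smul, Real.norm_of_nonneg hc, mul_assoc, sum_mul]
  gcongr
  calc ‖∑ i, (h i (y i) - h i x)‖ ≤ ∑ i, ‖h i (y i) - h i x‖ := norm_sum_le _ _
    _ ≤ ∑ i, Li i * δ := sum_le_sum fun i _ => (hLip i _ _).trans (by gcongr; exacts [hLi i, hy i])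

lemma norm_sub_le_mul_sum_Ico {x d : ℕ → E} {η : ℝ} (hη : 0 ≤ η)
    (hx : ∀ l, x (l + 1) = x l + η • d l) {p q : ℕ} (hpq : p ≤ q) :
    ‖x p - x q‖ ≤ η * ∑ l ∈ Ico p q, ‖d l‖ := by
  rw [← dist_eq_norm, mul_sum]
  refine (dist_le_Ico_sum_dist x hpq).trans_eq (sum_congr rfl fun l _ => ?_)
  rw [dist_comm, dist_eq_norm, hx, add_sub_cancel_left, norm_smul, Real.norm_of_nonneg hη]

lemma sq_norm_delayed_sub_le (hc : 0 ≤ c) (hLi : ∀ i, 0 ≤ Li i)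
    (hLip : ∀ i u v, ‖h i u - h i v‖ ≤ Li i * ‖u - v‖) {x d : ℕ → E} {η : ℝ} (hη : 0 ≤ η)
    (hx : ∀ l, x (l + 1) = x l + η • d l) {K : ℕ} {τ : ι → ℕ → ℕ}
    (hτ : ∀ i j, j - K ≤ τ i j ∧ τ i j ≤ j) (j : ℕ) :
    ‖c • ∑ i, h i (x (τ i j)) - c • ∑ i, h i (x j)‖ ^ 2
      ≤ η ^ 2 * (c * ∑ i, Li i) ^ 2 * K * ∑ l ∈ Ico (j - K) j, ‖d l‖ ^ 2 := by
  have hpath : ∀ i, ‖x (τ i j) - x j‖ ≤ η * ∑ l ∈ Ico (j - K) j, ‖d l‖ := fun i =>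
    (norm_sub_le_mul_sum_Ico hη hx (hτ i j).2).trans <| by
      gcongr
      exact (hτ i j).1
  have hcard : ((#(Ico (j - K) j) : ℕ) : ℝ) ≤ K := by
    rw [Nat.card_Ico]; exact_mod_cast (by omega : j - (j - K) ≤ K)
  calc ‖c • ∑ i, h i (x (τ i j)) - c • ∑ i, h i (x j)‖ ^ 2
      ≤ (c * (∑ i, Li i) * (η * ∑ l ∈ Ico (j - K) j, ‖d l‖)) ^ 2 := by
        gcongr; exact norm_smul_sum_sub_le hc hLi hLip hpath
    _ = η ^ 2 * (c * ∑ i, Li i) ^ 2 * (∑ l ∈ Ico (j - K) j, ‖d l‖) ^ 2 := by ring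
    _ ≤ η ^ 2 * (c * ∑ i, Li i) ^ 2 * (K * ∑ l ∈ Ico (j - K) j, ‖d l‖ ^ 2) := by
        gcongr
        exact sq_sum_le_card_mul_sum_sq.trans (by gcongr)
    _ = _ := by ring

end Aggregated

section DelayedRecursion

variable {F D R : ℕ → ℝ} {η L μ : ℝ} {K : ℕ}

lemma mul_sum_Ico_le_sub_add {c b : ℝ} (hdesc : ∀ j, F (j + 1) ≤ F j - c * D j + b * R j)
    {p q : ℕ} (hpq : p ≤ q) : c * ∑ j ∈ Ico p q, D j ≤ F p - F q + b * ∑ j ∈ Ico p q, R j := by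
  induction q, hpq using Nat.le_induction with
  | base => simp
  | succ q hpq ih =>
    rw [sum_Ico_succ_top hpq, sum_Ico_succ_top hpq]
    linarith [hdesc q]

lemma mul_sum_Ico_le_of_delayed_error
    (hdesc : ∀ j, F (j + 1) ≤ F j - η / 2 * (1 - η * L) * D j + η / 2 * R j)
    (herr : ∀ j, R j ≤ η ^ 2 * L ^ 2 * K * ∑ l ∈ Ico (j - K) j, D l) (hD : ∀ l, 0 ≤ D l)
    (hη : 0 ≤ η) (hL : 0 ≤ L) (hηLK : η * L * (K + 1) ≤ 1) {p k : ℕ} (hpk : p ≤ k) :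
    η / 2 * (1 - η * L) * ∑ j ∈ Ico p k, D j
      ≤ F p - F k + η * K * L * (η / 2 * (1 - η * L) * ∑ l ∈ Ico (p - K) k, D l) := by
  have hR : ∑ j ∈ Ico p k, R j ≤ η ^ 2 * L ^ 2 * K * (K * ∑ l ∈ Ico (p - K) k, D l) :=
    calc ∑ j ∈ Ico p k, R j ≤ ∑ j ∈ Ico p k, η ^ 2 * L ^ 2 * K * ∑ l ∈ Ico (j - K) j, D l :=
          sum_le_sum fun j _ => herr j
      _ ≤ η ^ 2 * L ^ 2 * K * (K * ∑ l ∈ Ico (p - K) k, D l) := by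
          rw [← mul_sum]; gcongr; exact sum_Ico_sum_Ico_sub_le hD K p k
  have hcoef : η / 2 * (η ^ 2 * L ^ 2 * K * K) ≤ η * K * L * (η / 2 * (1 - η * L)) := by
    rw [show η / 2 * (η ^ 2 * L ^ 2 * K * K) = η * K * L * (η / 2 * (η * L * K)) by ring]
    gcongr; linarith
  have hW : 0 ≤ ∑ l ∈ Ico (p - K) k, D l := sum_nonneg fun l _ => hD l
  nlinarith [mul_sum_Ico_le_sub_add hdesc hpk,
    mul_le_mul_of_nonneg_left hR (by positivity : (0 : ℝ) ≤ η / 2),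
    mul_le_mul_of_nonneg_right hcoef hW]

lemma mul_sum_Ico_le_of_sq_le (hF : ∀ j, 0 ≤ F j)
    (hDF : ∀ j, μ * η ^ 2 * D j ≤ 4 * (F j + F (j + 1))) (hD : ∀ l, 0 ≤ D l) (hμ : 0 < μ)
    (hη : 0 ≤ η) (hL : 0 ≤ L) (p q : ℕ) :
    η * K * L * (η / 2 * (1 - η * L) * ∑ j ∈ Ico p q, D j)
      ≤ 4 * K * (L / μ) * ∑ j ∈ Icc p q, F j := by
  have hsum : μ * (η ^ 2 * ∑ j ∈ Ico p q, D j) ≤ 8 * ∑ j ∈ Icc p q, F j :=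
    calc μ * (η ^ 2 * ∑ j ∈ Ico p q, D j) ≤ ∑ j ∈ Ico p q, 4 * (F j + F (j + 1)) := by
          rw [mul_sum, mul_sum]; exact sum_le_sum fun j _ => by linarith [hDF j]
      _ ≤ 8 * ∑ j ∈ Icc p q, F j := by
          rw [← mul_sum]; linarith [sum_Ico_add_succ_le_two_mul hF p q]
  have hW : 0 ≤ ∑ j ∈ Ico p q, D j := sum_nonneg fun l _ => hD l
  calc η * K * L * (η / 2 * (1 - η * L) * ∑ j ∈ Ico p q, D j)
      ≤ K * L / (2 * μ) * (μ * (η ^ 2 * ∑ j ∈ Ico p q, D j)) := by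
        rw [show K * L / (2 * μ) * (μ * (η ^ 2 * ∑ j ∈ Ico p q, D j))
          = η * K * L * (η / 2 * ∑ j ∈ Ico p q, D j) by field_simp]
        gcongr
        nlinarith [mul_nonneg hη hL]
    _ ≤ K * L / (2 * μ) * (8 * ∑ j ∈ Icc p q, F j) := by gcongr
    _ = 4 * K * (L / μ) * ∑ j ∈ Icc p q, F j := by ring

lemma delayed_error_le {a k : ℕ} {ε : ℕ → ℝ} (hF : ∀ j, 0 ≤ F j) (hD : ∀ j, 0 ≤ D j)
    (hdesc : ∀ j, F (j + 1) ≤ F j - η / 2 * (1 - η * L) * D j + η / 2 * R j)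
    (herr : ∀ j, R j ≤ η ^ 2 * L ^ 2 * K * ∑ l ∈ Ico (j - K) j, D l)
    (hDF : ∀ j, μ * η ^ 2 * D j ≤ 4 * (F j + F (j + 1)))
    (hη : 0 < η) (hL : 0 < L) (hμ : 0 < μ) (hηLK : η * L * (K + 1) ≤ 1) (ha : 2 ≤ a)
    (hε : ∀ i, ε i = 2 * η * L * (η * K * L) ^ (i - 1)) :
    η * R k ≤ ∑ i ∈ Icc 1 (a - 1), ε i * (F (k - i * K) - F k)
      + 4 * K * (L / μ) * ε (a - 1) * ∑ j ∈ Icc (k - a * K) k, F j := by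
  set W : ℕ → ℝ := fun i => η / 2 * (1 - η * L) * ∑ l ∈ Ico (k - i * K) k, D l
  have hεnn : ∀ i, 0 ≤ ε i := fun i => by rw [hε]; positivity
  have hεsucc : ∀ i, 1 ≤ i → ε (i + 1) = ε i * (η * K * L) := fun i hi => by
    rw [hε, hε, show i + 1 - 1 = i - 1 + 1 by omega, pow_succ]; ring
  have hbase : η * R k ≤ ε 1 * W 1 := by
    have hcoef : η * (η ^ 2 * L ^ 2 * K) ≤ ε 1 * (η / 2 * (1 - η * L)) := by
      rw [show ε 1 = 2 * η * L by simp [hε],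
        show η * (η ^ 2 * L ^ 2 * K) = 2 * η * L * (η / 2 * (η * L * K)) by ring]
      gcongr; linarith
    have hW : 0 ≤ ∑ l ∈ Ico (k - K) k, D l := sum_nonneg fun l _ => hD l
    simp only [W, one_mul]
    nlinarith [mul_le_mul_of_nonneg_left (herr k) hη.le, mul_le_mul_of_nonneg_right hcoef hW]
  have hstep : ∀ i ∈ Icc 1 (a - 1),
      ε i * W i ≤ ε i * (F (k - i * K) - F k) + ε (i + 1) * W (i + 1) := by
    intro i hi
    have hwin :=
      mul_sum_Ico_le_of_delayed_error hdesc herr hD hη.le hL.le hηLK (Nat.sub_le k (i * K))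
    rw [Nat.sub_sub, ← add_one_mul] at hwin
    rw [hεsucc i (mem_Icc.mp hi).1, mul_assoc, ← mul_add]
    exact mul_le_mul_of_nonneg_left hwin (hεnn i)
  have hchain := le_sum_Icc_add_of_le_add_succ hstep
  rw [Nat.sub_add_cancel (by omega : 1 ≤ a)] at hchain
  have htail : ε a * W a ≤ ε (a - 1) * (4 * K * (L / μ) * ∑ j ∈ Icc (k - a * K) k, F j) := by
    rw [show a = a - 1 + 1 by omega, hεsucc (a - 1) (by omega), Nat.add_sub_cancel, mul_assoc]
    exact mul_le_mul_of_nonneg_left (mul_sum_Ico_le_of_sq_le hF hDF hD hμ hη.le hL.le _ _) (hεnn _)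
  linarith

end DelayedRecursion

lemma piag_recursion {E : Type*} [NormedAddCommGroup E] [InnerProductSpace ℝ E] {F : E → ℝ}
    {μ L η : ℝ} {K a k : ℕ} {ε : ℕ → ℝ} {x d e : ℕ → E} {xs : E}
    (hF : StrongConvexOn Set.univ μ F) (hxs : IsMinOn F Set.univ xs)
    (hB : ∀ j z, F (x (j + 1)) ≤ F z + ⟪z - x (j + 1), d j + e j⟫ + L * η ^ 2 / 2 * ‖d j‖ ^ 2
      - μ / 2 * ‖z - x j‖ ^ 2)
    (hx : ∀ j, x (j + 1) = x j + η • d j)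
    (herr : ∀ j, ‖e j‖ ^ 2 ≤ η ^ 2 * L ^ 2 * K * ∑ l ∈ Ico (j - K) j, ‖d l‖ ^ 2)
    (hη : 0 < η) (hμ : 0 < μ) (hμL : μ ≤ L) (hηLK : η * L * (K + 1) ≤ 1) (ha : 2 ≤ a)
    (hε : ∀ i, ε i = 2 * η * L * (η * K * L) ^ (i - 1)) :
    (1 + η * μ / 8) * (F (x (k + 1)) - F xs)
      ≤ (1 - ∑ i ∈ Icc 1 (a - 1), ε i) * (F (x k) - F xs)
        + ∑ i ∈ Icc 1 (a - 1), ε i * (F (x (k - i * K)) - F xs)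
        + 4 * K * (L / μ) * ε (a - 1) * ∑ j ∈ Icc (k - a * K) k, (F (x j) - F xs) := by
  have hηL : η * L ≤ 1 := by nlinarith [mul_nonneg hη.le (hμ.le.trans hμL)]
  have hcontr := proxGrad_contraction (xs := xs) (hB k) (hx k) hη hμ hηL
    (by nlinarith [mul_le_mul_of_nonneg_left hμL hη.le])
  have hdelay := delayed_error_le (F := fun j => F (x j) - F xs) (D := fun j => ‖d j‖ ^ 2)
    (R := fun j => ‖e j‖ ^ 2) (k := k) (fun j => sub_nonneg.mpr (isMinOn_univ_iff.mp hxs _))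
    (fun j => sq_nonneg _) (fun j => by linarith [proxGrad_descent (hB j) (hx j) hη]) herr
    (fun j => by
      have := hF.mul_sq_norm_sub_le_of_isMinOn hμ.le hxs (x (j + 1)) (x j)
      rw [hx, add_sub_cancel_left, norm_smul, Real.norm_of_nonneg hη.le, ← hx] at this
      linarith)
    hη (hμ.trans_le hμL) hμ hηLK ha hε
  have hsplit : ∑ i ∈ Icc 1 (a - 1), ε i * ((F (x (k - i * K)) - F xs) - (F (x k) - F xs))
      = ∑ i ∈ Icc 1 (a - 1), ε i * (F (x (k - i * K)) - F xs)
        - (∑ i ∈ Icc 1 (a - 1), ε i) * (F (x k) - F xs) := by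
    rw [sum_mul, ← sum_sub_distrib]; simp only [mul_sub]
  linarith

theorem stmt13_general
    {n m K : ℕ}
    (f : Fin m → EuclideanSpace ℝ (Fin n) → ℝ) (Li : Fin m → ℝ)
    (hLi : ∀ i, 0 ≤ Li i)
    (hdiff : ∀ i, Differentiable ℝ (f i))
    (hLip : ∀ i x y, ‖gradient (f i) x - gradient (f i) y‖ ≤ Li i * ‖x - y‖)
    (fs : EuclideanSpace ℝ (Fin n) → ℝ)
    (hfs : ∀ z, fs z = (m : ℝ)⁻¹ * ∑ i, f i z)
    (L : ℝ) (hL : L = (m : ℝ)⁻¹ * ∑ i, Li i) (hLpos : 0 < L)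
    (μ : ℝ) (hμ : 0 < μ)
    (hsc : ConvexOn ℝ Set.univ (fun z => fs z - μ / 2 * ‖z‖ ^ 2))
    (r : EuclideanSpace ℝ (Fin n) → ℝ)
    (hr : ConvexOn ℝ Set.univ r)
    (η : ℝ) (hη : 0 < η)
    (x : ℕ → EuclideanSpace ℝ (Fin n))
    (τ : Fin m → ℕ → ℕ) (hτ : ∀ i k, k - K ≤ τ i k ∧ τ i k ≤ k)
    (g : ℕ → EuclideanSpace ℝ (Fin n))
    (hg : ∀ k, g k = (m : ℝ)⁻¹ • ∑ i, gradient (f i) (x (τ i k)))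
    (hiter : ∀ (k : ℕ) (z : EuclideanSpace ℝ (Fin n)),
      1 / 2 * ‖x (k + 1) - (x k - η • g k)‖ ^ 2 + η * r (x (k + 1))
        ≤ 1 / 2 * ‖z - (x k - η • g k)‖ ^ 2 + η * r z)
    (d : ℕ → EuclideanSpace ℝ (Fin n)) (hd : ∀ k, d k = η⁻¹ • (x (k + 1) - x k))
    (xs : EuclideanSpace ℝ (Fin n)) (hxs : ∀ z, fs xs + r xs ≤ fs z + r z)
    (Fk : ℕ → ℝ) (hFk : ∀ k, Fk k = fs (x k) + r (x k) - (fs xs + r xs))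
    (hηle : η ≤ 1 / (L * (K + 1)))
    (Q : ℝ) (hQ : Q = L / μ)
    (a : ℕ) (ha : 2 ≤ a)
    (ε : ℕ → ℝ) (hε : ∀ i, ε i = 2 * η * L * (η * K * L) ^ (i - 1))
    (k : ℕ) :
    (1 + η * μ / 8) * Fk (k + 1)
      ≤ (1 - ∑ i ∈ Finset.Icc 1 (a - 1), ε i) * Fk k
        + ∑ i ∈ Finset.Icc 1 (a - 1), ε i * Fk (k - i * K)
        + 4 * K * Q * ε (a - 1) * ∑ j ∈ Finset.Icc (k - a * K) k, Fk j := by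
  rcases subsingleton_or_nontrivial (EuclideanSpace ℝ (Fin n)) with _ | _
  · have hF0 : ∀ j, Fk j = 0 := fun j => by rw [hFk, Subsingleton.elim (x j) xs, sub_self]
    simp [hF0]
  set G := fun y => (m : ℝ)⁻¹ • ∑ i, gradient (f i) y
  have hG : ∀ y, HasGradientAt fs (G y) y := fun y => by
    rw [show fs = fun z => (m : ℝ)⁻¹ * ∑ i, f i z from funext hfs]
    exact hasGradientAt_mul_sum _ fun i => hdiff i y
  have hGL : ∀ u v, ‖G u - G v‖ ≤ L * ‖u - v‖ := fun u v => by
    rw [hL]; exact norm_smul_sum_sub_le (by positivity) hLi hLip fun _ => le_rfl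
  have hf : StrongConvexOn Set.univ μ fs := strongConvexOn_iff_convex.mpr hsc
  have hx : ∀ j, x (j + 1) = x j + η • d j := fun j => by
    rw [hd, smul_smul, mul_inv_cancel₀ hη.ne', one_smul, add_sub_cancel]
  have herr : ∀ j, ‖g j - G (x j)‖ ^ 2 ≤ η ^ 2 * L ^ 2 * K * ∑ l ∈ Ico (j - K) j, ‖d l‖ ^ 2 :=
    fun j => by rw [hg, hL]; exact sq_norm_delayed_sub_le (by positivity) hLi hLip hη.le hx hτ j
  rw [le_div_iff₀ (by positivity)] at hηle
  obtain rfl : Fk = fun j => (fs + r) (x j) - (fs + r) xs := funext hFk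
  rw [hQ]
  exact piag_recursion (hf.add_convexOn hr) (isMinOn_univ_iff.mpr hxs)
    (fun j => proxGrad_le_add_inner hG hGL hf hr hη (hx j) (isMinOn_univ_iff.mpr (hiter j))) hx
    herr hη hμ (hf.le_of_lipschitz_gradient hG hGL) (by linarith) ha hε

/-- Corollary 1 of the paper: for `0 < η ≤ 1/(L(K+1))`, any integer `a ≥ 2` and
`k ≥ aK + 1`, with `ε_i = 2ηL(ηKL)^{i-1}` and `Q = L/μ`,
`(1 + ημ/8) F_{k+1} ≤ (1 - ∑ ε_i) F_k + ∑ ε_i F_{k-iK}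
  + 4KQ ε_{a-1} ∑_{j=k-aK}^{k} F_j`. -/
theorem stmt13
    {n m K : ℕ} (hm : 0 < m)
    (f : Fin m → EuclideanSpace ℝ (Fin n) → ℝ) (Li : Fin m → ℝ)
    (hLi : ∀ i, 0 ≤ Li i)
    (hdiff : ∀ i, Differentiable ℝ (f i))
    (hLip : ∀ i x y, ‖gradient (f i) x - gradient (f i) y‖ ≤ Li i * ‖x - y‖)
    (fs : EuclideanSpace ℝ (Fin n) → ℝ)
    (hfs : ∀ z, fs z = (m : ℝ)⁻¹ * ∑ i, f i z)
    (L : ℝ) (hL : L = (m : ℝ)⁻¹ * ∑ i, Li i) (hLpos : 0 < L)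
    (μ : ℝ) (hμ : 0 < μ)
    (hsc : ConvexOn ℝ Set.univ (fun z => fs z - μ / 2 * ‖z‖ ^ 2))
    (r : EuclideanSpace ℝ (Fin n) → ℝ)
    (hr : ConvexOn ℝ Set.univ r) (hrlsc : LowerSemicontinuous r)
    (η : ℝ) (hη : 0 < η)
    (x : ℕ → EuclideanSpace ℝ (Fin n))
    (τ : Fin m → ℕ → ℕ) (hτ : ∀ i k, k - K ≤ τ i k ∧ τ i k ≤ k)
    (g : ℕ → EuclideanSpace ℝ (Fin n))
    (hg : ∀ k, g k = (m : ℝ)⁻¹ • ∑ i, gradient (f i) (x (τ i k)))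
    (hiter : ∀ (k : ℕ) (z : EuclideanSpace ℝ (Fin n)),
      1 / 2 * ‖x (k + 1) - (x k - η • g k)‖ ^ 2 + η * r (x (k + 1))
        ≤ 1 / 2 * ‖z - (x k - η • g k)‖ ^ 2 + η * r z)
    (d : ℕ → EuclideanSpace ℝ (Fin n)) (hd : ∀ k, d k = η⁻¹ • (x (k + 1) - x k))
    (xs : EuclideanSpace ℝ (Fin n)) (hxs : ∀ z, fs xs + r xs ≤ fs z + r z)
    (Fk : ℕ → ℝ) (hFk : ∀ k, Fk k = fs (x k) + r (x k) - (fs xs + r xs))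
    (hηle : η ≤ 1 / (L * (K + 1)))
    (Q : ℝ) (hQ : Q = L / μ)
    (a : ℕ) (ha : 2 ≤ a)
    (ε : ℕ → ℝ) (hε : ∀ i, ε i = 2 * η * L * (η * K * L) ^ (i - 1))
    (k : ℕ) (hk : a * K + 1 ≤ k) :
    (1 + η * μ / 8) * Fk (k + 1)
      ≤ (1 - ∑ i ∈ Finset.Icc 1 (a - 1), ε i) * Fk k
        + ∑ i ∈ Finset.Icc 1 (a - 1), ε i * Fk (k - i * K)
        + 4 * K * Q * ε (a - 1) * ∑ j ∈ Finset.Icc (k - a * K) k, Fk j :=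
  stmt13_general f Li hLi hdiff hLip fs hfs L hL hLpos μ hμ hsc r hr η hη x τ hτ g hg hiter d hd xs
    hxs Fk hFk hηle Q hQ a ha ε hε k
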